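/- arXiv:0902.4587 — 2 statements merged into one kernel-verified Lean document; each statement's English description precedes it below -/
import Mathlib

section
/- If A ∈ ℝ^{p×q} and B ∈ ℝ^{r×s} are both rank-deficient matrices, then spark(A ⊗ B) = min{spark(A), spark(B)}. -/
/-!
Identify a vector `z` indexed by pairs with the matrix `X` whose `(l, j)` entry is `z (j, l)`,
so that `(A ⊗ B) z = vec (B X Aᵀ)`. Tensoring a sparsest kernel vector of `A` (or of `B`) with a
standard basis vector gives `spark (A ⊗ B) ≤ min (spark A) (spark B)`. Conversely, if
`B X Aᵀ = 0` with `X ≠ 0`, either `B X = 0`, and a nonzero column of `X` is a kernel vector of `B`,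
or some row of `B X` is a nonzero kernel vector of `A` supported on the nonzero columns of `X`;
in both cases it has at most as many nonzero entries as `z`.
-/

open Classical Kronecker

/-- Number of nonzero entries of a vector. -/
noncomputable def sparsity {n : Type*} (x : n → ℝ) : ℕ := Set.ncard {i | x i ≠ 0}

/-- The spark of a matrix: the minimal number of nonzero entries of a nonzero kernel
vector; if the kernel is trivial we use the convention `spark A = (number of columns) + 1`. -/
noncomputable def spark {m n : Type*} [Fintype m] [Fintype n] (A : Matrix m n ℝ) : ℕ :=
  if ∃ x : n → ℝ, x ≠ 0 ∧ A.mulVec x = 0 then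
    sInf {k | ∃ x : n → ℝ, x ≠ 0 ∧ A.mulVec x = 0 ∧ sparsity x = k}
  else Fintype.card n + 1

/-- Mutual incoherence: the largest absolute inner product of two distinct columns. -/
noncomputable def mutInc {m n : Type*} [Fintype m] (A : Matrix m n ℝ) : ℝ :=
  sSup {v | ∃ i j, i ≠ j ∧ v = |∑ k, A k i * A k j|}

/-- Off-diagonal mutual incoherence of two matrices. -/
noncomputable def mutIncOD {m n : Type*} [Fintype m] (A B : Matrix m n ℝ) : ℝ :=
  sSup {v | ∃ i j, i ≠ j ∧ v = |∑ k, A k i * B k j|}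

/-- Diagonal mutual incoherence of two matrices. -/
noncomputable def mutIncD {m n : Type*} [Fintype m] (A B : Matrix m n ℝ) : ℝ :=
  sSup {v | ∃ i, v = |∑ k, A k i * B k i|}

/-- Mutual incoherence of a matrix whose columns are renormalized. -/
noncomputable def mutIncN {m n : Type*} [Fintype m] (C : Matrix m n ℝ) : ℝ :=
  sSup {v | ∃ i j, i ≠ j ∧
    v = |∑ k, C k i * C k j| /
        (Real.sqrt (∑ k, (C k i) ^ 2) * Real.sqrt (∑ k, (C k j) ^ 2))}

/-- The `k`-restricted isometry constant of a matrix. -/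
noncomputable def ripConst {m n : Type*} [Fintype m] [Fintype n] (k : ℕ)
    (A : Matrix m n ℝ) : ℝ :=
  sInf {δ | 0 ≤ δ ∧ ∀ x : n → ℝ, sparsity x ≤ k →
    (1 - δ) * ∑ i, (x i) ^ 2 ≤ ∑ i, (A.mulVec x i) ^ 2 ∧
    ∑ i, (A.mulVec x i) ^ 2 ≤ (1 + δ) * ∑ i, (x i) ^ 2}

/-- Iterated Kronecker product of a family of matrices (up to the standard
reindexing of the row/column index sets). -/
noncomputable def kronFamily {N : ℕ} {m n : Fin N → ℕ}
    (A : ∀ i, Matrix (Fin (m i)) (Fin (n i)) ℝ) :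
    Matrix (∀ i, Fin (m i)) (∀ i, Fin (n i)) ℝ :=
  fun r c => ∏ i, A i (r i) (c i)

open Matrix Function

lemma sparsity_le_of_support_subset_image {α β : Type*} [Finite α] {x : α → ℝ} {y : β → ℝ}
    (f : α → β) (h : support y ⊆ f '' support x) : sparsity y ≤ sparsity x :=
  (Set.ncard_le_ncard h).trans (Set.ncard_image_le (Set.toFinite _))

-- `vec (vecMulVec y x)` is the Kronecker product `x ⊗ y`: its `(j, l)` entry is `y l * x j`.
lemma sparsity_vec_vecMulVec {m n : Type*} (y : m → ℝ) (x : n → ℝ) :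
    sparsity (vec (vecMulVec y x)) = sparsity x * sparsity y := by
  have hsupp : support (vec (vecMulVec y x)) = support x ×ˢ support y := by
    ext ⟨j, l⟩
    simp [vecMulVec_apply, and_comm]
  exact (congrArg Set.ncard hsupp).trans Set.ncard_prod

lemma sparsity_single_one {n : Type*} (i : n) : sparsity (Pi.single i (1 : ℝ)) = 1 := by
  rw [sparsity, ← support, Pi.support_single_of_ne one_ne_zero, Set.ncard_singleton]

lemma vec_vecMulVec_ne_zero {m n : Type*} {y : m → ℝ} {x : n → ℝ} (hy : y ≠ 0) (hx : x ≠ 0) :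
    vec (vecMulVec y x) ≠ 0 := by
  obtain ⟨j, hj⟩ := Function.ne_iff.mp hx
  obtain ⟨l, hl⟩ := Function.ne_iff.mp hy
  exact Function.ne_iff.mpr ⟨(j, l), mul_ne_zero hl hj⟩

section Spark

variable {m n : Type*} [Fintype m] [Fintype n] {M : Matrix m n ℝ}

lemma spark_le_sparsity {x : n → ℝ} (hx : x ≠ 0) (hMx : M *ᵥ x = 0) :
    spark M ≤ sparsity x := by
  rw [spark, if_pos ⟨x, hx, hMx⟩]
  exact Nat.sInf_le ⟨x, hx, hMx, rfl⟩

lemma exists_sparsity_eq_spark (h : ∃ x : n → ℝ, x ≠ 0 ∧ M *ᵥ x = 0) :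
    ∃ x : n → ℝ, x ≠ 0 ∧ M *ᵥ x = 0 ∧ sparsity x = spark M := by
  rw [spark, if_pos h]
  obtain ⟨x, hx, hMx⟩ := h
  exact Nat.sInf_mem (s := {k | ∃ x, x ≠ 0 ∧ M *ᵥ x = 0 ∧ sparsity x = k}) ⟨_, x, hx, hMx, rfl⟩

end Spark

section Kronecker

variable {m₁ n₁ m₂ n₂ : Type*} [Fintype n₁] [Fintype n₂] (A : Matrix m₁ n₁ ℝ) (B : Matrix m₂ n₂ ℝ)

lemma kronecker_mulVec_vec_vecMulVec_eq_zero {x : n₁ → ℝ} {y : n₂ → ℝ}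
    (h : A *ᵥ x = 0 ∨ B *ᵥ y = 0) : (A ⊗ₖ B) *ᵥ vec (vecMulVec y x) = 0 := by
  rw [kronecker_mulVec_vec, mul_vecMulVec, vecMulVec_mul, vecMul_transpose]
  ext ⟨j, l⟩
  rcases h with h | h <;> simp [h, vecMulVec_apply]

variable [Fintype m₁] [Fintype m₂]

lemma spark_kronecker_le_sparsity_mul {x : n₁ → ℝ} {y : n₂ → ℝ} (hx : x ≠ 0) (hy : y ≠ 0)
    (h : A *ᵥ x = 0 ∨ B *ᵥ y = 0) : spark (A ⊗ₖ B) ≤ sparsity x * sparsity y := by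
  rw [← sparsity_vec_vecMulVec]
  exact spark_le_sparsity (vec_vecMulVec_ne_zero hy hx)
    (kronecker_mulVec_vec_vecMulVec_eq_zero A B h)

lemma spark_kronecker_le_spark_left [Nonempty n₂] (hA : ∃ x : n₁ → ℝ, x ≠ 0 ∧ A *ᵥ x = 0) :
    spark (A ⊗ₖ B) ≤ spark A := by
  obtain ⟨x, hx, hAx, hsx⟩ := exists_sparsity_eq_spark hA
  have hy : (Pi.single (Classical.arbitrary n₂) 1 : _ → ℝ) ≠ 0 := by simp
  simpa [hsx, sparsity_single_one] using spark_kronecker_le_sparsity_mul A B hx hy (.inl hAx)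

lemma spark_kronecker_le_spark_right [Nonempty n₁] (hB : ∃ y : n₂ → ℝ, y ≠ 0 ∧ B *ᵥ y = 0) :
    spark (A ⊗ₖ B) ≤ spark B := by
  obtain ⟨y, hy, hBy, hsy⟩ := exists_sparsity_eq_spark hB
  have hx : (Pi.single (Classical.arbitrary n₁) 1 : _ → ℝ) ≠ 0 := by simp
  simpa [hsy, sparsity_single_one] using spark_kronecker_le_sparsity_mul A B hx hy (.inr hBy)

lemma min_spark_le_sparsity_of_kronecker_mulVec_eq_zero {z : n₁ × n₂ → ℝ} (hz : z ≠ 0)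
    (hABz : (A ⊗ₖ B) *ᵥ z = 0) : min (spark A) (spark B) ≤ sparsity z := by
  set X : Matrix n₂ n₁ ℝ := of fun l j => z (j, l)
  have hzX : z = vec X := rfl
  have hX : B * X * Aᵀ = 0 := by rwa [hzX, kronecker_mulVec_vec, vec_eq_zero_iff] at hABz
  by_cases hBX : B * X = 0
  · obtain ⟨⟨j, l⟩, hjl⟩ := Function.ne_iff.mp hz
    have hcol : B *ᵥ Xᵀ j = 0 := by
      ext k
      simpa [mulVec, dotProduct, mul_apply] using congrFun₂ hBX k j
    calc min (spark A) (spark B) ≤ spark B := min_le_right _ _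
      _ ≤ sparsity (Xᵀ j) := spark_le_sparsity (Function.ne_iff.mpr ⟨l, hjl⟩) hcol
      _ ≤ sparsity z := sparsity_le_of_support_subset_image Prod.snd fun l' hl' =>
          ⟨(j, l'), hl', rfl⟩
  · obtain ⟨k, j, hkj⟩ : ∃ k j, (B * X) k j ≠ 0 := by
      simpa [← Matrix.ext_iff] using hBX
    have hrow : A *ᵥ (B * X) k = 0 := by
      ext i
      simpa [mulVec, dotProduct, mul_apply, mul_comm] using congrFun₂ hX k i
    have hsupp : support ((B * X) k) ⊆ Prod.fst '' support z := fun j' hj' => by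
      obtain ⟨l, hl⟩ : ∃ l, X l j' ≠ 0 := by
        by_contra! h
        exact hj' (by simp [mul_apply, h])
      exact ⟨(j', l), hl, rfl⟩
    calc min (spark A) (spark B) ≤ spark A := min_le_left _ _
      _ ≤ sparsity ((B * X) k) := spark_le_sparsity (Function.ne_iff.mpr ⟨j, hkj⟩) hrow
      _ ≤ sparsity z := sparsity_le_of_support_subset_image Prod.fst hsupp

end Kronecker

theorem stmt4 {p q r s : ℕ} (A : Matrix (Fin p) (Fin q) ℝ)
    (B : Matrix (Fin r) (Fin s) ℝ)
    (hA : ∃ x : Fin q → ℝ, x ≠ 0 ∧ A.mulVec x = 0)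
    (hB : ∃ x : Fin s → ℝ, x ≠ 0 ∧ B.mulVec x = 0) :
    spark (A ⊗ₖ B) = min (spark A) (spark B) := by
  obtain ⟨x, hx, hAx⟩ := hA
  obtain ⟨y, hy, hBy⟩ := hB
  have : Nonempty (Fin q) := (Function.ne_iff.mp hx).nonempty
  have : Nonempty (Fin s) := (Function.ne_iff.mp hy).nonempty
  have hker : ∃ z : Fin q × Fin s → ℝ, z ≠ 0 ∧ (A ⊗ₖ B) *ᵥ z = 0 :=
    ⟨_, vec_vecMulVec_ne_zero hy hx, kronecker_mulVec_vec_vecMulVec_eq_zero A B (.inl hAx)⟩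
  obtain ⟨z, hz, hABz, hsz⟩ := exists_sparsity_eq_spark hker
  refine le_antisymm (le_min ?_ ?_) ?_
  · exact spark_kronecker_le_spark_left A B ⟨x, hx, hAx⟩
  · exact spark_kronecker_le_spark_right A B ⟨y, hy, hBy⟩
  · exact hsz ▸ min_spark_le_sparsity_of_kronecker_mulVec_eq_zero A B hz hABz
end

section
/- For matrices A and B with unit-norm columns, the mutual incoherence of their Kronecker product satisfies M(A ⊗ B) = max{M(A), M(B)}. -/
open Classical Kronecker

/-!
The Gram matrix of `A ⊗ₖ B` is the Kronecker product of the Gram matrices, so the inner product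
of columns `(p, q)` and `(r, s)` is `⟨a_p, a_r⟩ ⟨b_q, b_s⟩`. For distinct pairs one factor is an
off-diagonal inner product and the other has absolute value at most `1` by Cauchy–Schwarz, which
gives `≤`. Conversely, pairing two columns of `A` with the same unit column of `B` (or vice versa)
reproduces every off-diagonal inner product of `A` (or of `B`) in `A ⊗ₖ B`, which gives `≥`.
-/

section MutualIncoherence

open scoped Matrix

variable {m n m' n' : Type*} [Fintype m] [Fintype m']

theorem abs_sum_mul_le_one_of_sum_sq_eq_one (A : Matrix m n ℝ) (hA : ∀ j, ∑ k, A k j ^ 2 = 1)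
    (i j : n) : |∑ k, A k i * A k j| ≤ 1 := by
  rw [← sq_le_one_iff_abs_le_one]
  calc (∑ k, A k i * A k j) ^ 2 ≤ (∑ k, A k i ^ 2) * ∑ k, A k j ^ 2 :=
        Finset.sum_mul_sq_le_sq_mul_sq _ _ _
    _ = 1 := by rw [hA, hA, one_mul]

theorem abs_sum_mul_le_mutInc [Fintype n] (A : Matrix m n ℝ) {i j : n} (hij : i ≠ j) :
    |∑ k, A k i * A k j| ≤ mutInc A := by
  refine le_csSup ?_ ⟨i, j, hij, rfl⟩
  refine (Set.finite_range fun p : n × n => |∑ k, A k p.1 * A k p.2|).subset ?_ |>.bddAbove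
  rintro v ⟨i, j, -, rfl⟩
  exact ⟨(i, j), rfl⟩

theorem mutInc_le_of_forall_abs_sum_mul_le (A : Matrix m n ℝ) {c : ℝ} (hc : 0 ≤ c)
    (h : ∀ i j, i ≠ j → |∑ k, A k i * A k j| ≤ c) : mutInc A ≤ c :=
  Real.sSup_le (by rintro v ⟨i, j, hij, rfl⟩; exact h i j hij) hc

theorem mutInc_nonneg (A : Matrix m n ℝ) : 0 ≤ mutInc A :=
  Real.sSup_nonneg (by rintro v ⟨i, j, -, rfl⟩; exact abs_nonneg _)

theorem sum_kronecker_mul_kronecker (A : Matrix m n ℝ) (B : Matrix m' n' ℝ) (p r : n)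
    (q s : n') :
    ∑ k, (A ⊗ₖ B) k (p, q) * (A ⊗ₖ B) k (r, s)
      = (∑ k, A k p * A k r) * ∑ k, B k q * B k s := by
  have gram : (A ⊗ₖ B)ᵀ * (A ⊗ₖ B) = (Aᵀ * A) ⊗ₖ (Bᵀ * B) := by
    rw [Matrix.mul_kronecker_mul, ← Matrix.kroneckerMap_transpose]
  simpa only [Matrix.mul_apply, Matrix.transpose_apply, Matrix.kroneckerMap_apply]
    using congrFun (congrFun gram (p, q)) (r, s)

theorem mutInc_kronecker_le_max [Fintype n] [Fintype n'] (A : Matrix m n ℝ) (B : Matrix m' n' ℝ)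
    (hA : ∀ j, ∑ k, A k j ^ 2 = 1) (hB : ∀ j, ∑ k, B k j ^ 2 = 1) :
    mutInc (A ⊗ₖ B) ≤ max (mutInc A) (mutInc B) := by
  refine mutInc_le_of_forall_abs_sum_mul_le _ (le_max_of_le_left (mutInc_nonneg A)) ?_
  rintro ⟨p, q⟩ ⟨r, s⟩ hne
  rw [sum_kronecker_mul_kronecker, abs_mul]
  by_cases hpr : p = r
  · subst hpr
    have hqs : q ≠ s := fun h => hne (by rw [h])
    exact le_max_of_le_right <|
      (mul_le_of_le_one_left (abs_nonneg _) (abs_sum_mul_le_one_of_sum_sq_eq_one A hA p p)).trans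
        (abs_sum_mul_le_mutInc B hqs)
  · exact le_max_of_le_left <|
      (mul_le_of_le_one_right (abs_nonneg _) (abs_sum_mul_le_one_of_sum_sq_eq_one B hB q s)).trans
        (abs_sum_mul_le_mutInc A hpr)

theorem mutInc_le_mutInc_kronecker_left [Fintype n] [Fintype n'] [Nonempty n']
    (A : Matrix m n ℝ) (B : Matrix m' n' ℝ) (hB : ∀ j, ∑ k, B k j ^ 2 = 1) :
    mutInc A ≤ mutInc (A ⊗ₖ B) := by
  obtain ⟨q⟩ := ‹Nonempty n'›
  refine mutInc_le_of_forall_abs_sum_mul_le _ (mutInc_nonneg _) fun i j hij => ?_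
  have hq : ∑ k, B k q * B k q = 1 := by simpa only [sq] using hB q
  calc |∑ k, A k i * A k j| = |∑ k, (A ⊗ₖ B) k (i, q) * (A ⊗ₖ B) k (j, q)| := by
        rw [sum_kronecker_mul_kronecker, hq, mul_one]
    _ ≤ mutInc (A ⊗ₖ B) := abs_sum_mul_le_mutInc _ fun h => hij (congrArg Prod.fst h)

theorem mutInc_le_mutInc_kronecker_right [Fintype n] [Fintype n'] [Nonempty n]
    (A : Matrix m n ℝ) (B : Matrix m' n' ℝ) (hA : ∀ j, ∑ k, A k j ^ 2 = 1) :
    mutInc B ≤ mutInc (A ⊗ₖ B) := by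
  obtain ⟨p⟩ := ‹Nonempty n›
  refine mutInc_le_of_forall_abs_sum_mul_le _ (mutInc_nonneg _) fun i j hij => ?_
  have hp : ∑ k, A k p * A k p = 1 := by simpa only [sq] using hA p
  calc |∑ k, B k i * B k j| = |∑ k, (A ⊗ₖ B) k (p, i) * (A ⊗ₖ B) k (p, j)| := by
        rw [sum_kronecker_mul_kronecker, hp, one_mul]
    _ ≤ mutInc (A ⊗ₖ B) := abs_sum_mul_le_mutInc _ fun h => hij (congrArg Prod.snd h)

end MutualIncoherence

theorem stmt10 {m₁ n₁ m₂ n₂ : ℕ} (hn₁ : 2 ≤ n₁) (hn₂ : 2 ≤ n₂)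
    (A : Matrix (Fin m₁) (Fin n₁) ℝ) (B : Matrix (Fin m₂) (Fin n₂) ℝ)
    (hA : ∀ j, ∑ k, (A k j) ^ 2 = 1) (hB : ∀ j, ∑ k, (B k j) ^ 2 = 1) :
    mutInc (A ⊗ₖ B) = max (mutInc A) (mutInc B) := by
  have : Nonempty (Fin n₁) := ⟨⟨0, by omega⟩⟩
  have : Nonempty (Fin n₂) := ⟨⟨0, by omega⟩⟩
  exact le_antisymm (mutInc_kronecker_le_max A B hA hB)
    (max_le (mutInc_le_mutInc_kronecker_left A B hB) (mutInc_le_mutInc_kronecker_right A B hA))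
end
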